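/- Let W = W(A,T,φ) be a simple generalized Witt algebra over a field F of characteristic 0 (so A ≠ 0 and φ is nondegenerate). Then for any two elements x, y ∈ W there exist a finitely generated (hence free of some finite rank n ≥ 1) subgroup A' of A and a finite-dimensional subspace T' of T such that (A',T') is a nondegenerate pair and both x and y belong to the Lie subalgebra of W consisting of the finitely supported functions supported in A' with values in T'. -/

import Mathlib

/-! Generalized Witt algebras `W(A,T,φ)` over a field `F` of characteristic `0`,
following Djokovic-Zhao. Here `A` is an (additive) abelian group, `T` an
`F`-vector space, and `φ : T × A → F` is `F`-linear in the first variable and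
additive in the second (encoded as `φ : T →ₗ[F] (A →+ F)`). -/

namespace GW

variable {F : Type*} [Field F]
variable {A : Type*} [AddCommGroup A]
variable {T : Type*} [AddCommGroup T] [Module F T]
variable (φ : T →ₗ[F] (A →+ F))

/-- The bracket on finitely supported functions `A →₀ T`: the bilinear extension of
`[t^α a, t^β b] = t^(α+β) (φ a β • b - φ b α • a)`. -/
noncomputable def brk (x y : A →₀ T) : A →₀ T :=
  x.sum fun α a => y.sum fun β b => Finsupp.single (α + β) (φ a β • b - φ b α • a)

lemma brk_zero_left (y : A →₀ T) : brk φ 0 y = 0 := by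
  simp [brk]

lemma brk_zero_right (x : A →₀ T) : brk φ x 0 = 0 := by
  simp [brk]

lemma brk_single_single (α β : A) (a b : T) :
    brk φ (Finsupp.single α a) (Finsupp.single β b)
      = Finsupp.single (α + β) (φ a β • b - φ b α • a) := by
  unfold brk
  rw [Finsupp.sum_single_index, Finsupp.sum_single_index]
  · simp
  · simp

lemma brk_add_left (x x' y : A →₀ T) : brk φ (x + x') y = brk φ x y + brk φ x' y := by
  unfold brk
  rw [Finsupp.sum_add_index']
  · intro α; simp
  · intro α a a'
    rw [← Finsupp.sum_add]
    congr 1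
    funext β b
    rw [← Finsupp.single_add]
    congr 1
    simp only [map_add, LinearMap.add_apply, AddMonoidHom.add_apply, add_smul, smul_add]
    abel

lemma brk_add_right (x y y' : A →₀ T) : brk φ x (y + y') = brk φ x y + brk φ x y' := by
  unfold brk
  rw [← Finsupp.sum_add]
  congr 1
  funext α a
  rw [Finsupp.sum_add_index']
  · intro β; simp
  · intro β b b'
    rw [← Finsupp.single_add]
    congr 1
    simp only [map_add, LinearMap.add_apply, AddMonoidHom.add_apply, add_smul, smul_add]
    abel

lemma brk_neg_swap (x y : A →₀ T) : brk φ y x = - brk φ x y := by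
  unfold brk
  rw [Finsupp.sum_comm]
  rw [← Finsupp.sum_neg]
  congr 1
  funext α a
  rw [← Finsupp.sum_neg]
  congr 1
  funext β b
  rw [← Finsupp.single_neg, add_comm β α]
  congr 1
  abel

lemma brk_smul_right (c : F) (x y : A →₀ T) : brk φ x (c • y) = c • brk φ x y := by
  unfold brk
  rw [Finsupp.smul_sum]
  congr 1
  funext α a
  rw [Finsupp.sum_smul_index', Finsupp.smul_sum]
  · congr 1
    funext β b
    rw [Finsupp.smul_single]
    congr 1
    simp only [map_smul, LinearMap.smul_apply, AddMonoidHom.smul_apply, smul_sub, smul_smul,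
      smul_eq_mul]
    rw [mul_comm]
  · intro β; simp

lemma brk_self [CharZero F] (x : A →₀ T) : brk φ x x = 0 := by
  have h : brk φ x x = -brk φ x x := brk_neg_swap φ x x
  have h2 : (2 : F) • brk φ x x = 0 := by
    rw [two_smul]
    nth_rewrite 2 [h]
    simp
  calc brk φ x x = (2 : F)⁻¹ • ((2 : F) • brk φ x x) :=
        (inv_smul_smul₀ two_ne_zero _).symm
    _ = 0 := by rw [h2, smul_zero]

lemma brk_leibniz (x y z : A →₀ T) :
    brk φ x (brk φ y z) = brk φ (brk φ x y) z + brk φ y (brk φ x z) := by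
  induction x using Finsupp.induction_linear with
  | zero => simp [brk_zero_left, brk_zero_right]
  | add f g hf hg =>
      simp only [brk_add_left, brk_add_right, hf, hg]; abel
  | single α a =>
    induction y using Finsupp.induction_linear with
    | zero => simp [brk_zero_left, brk_zero_right]
    | add f g hf hg =>
        simp only [brk_add_left, brk_add_right, hf, hg]; abel
    | single β b =>
      induction z using Finsupp.induction_linear with
      | zero => simp [brk_zero_left, brk_zero_right]
      | add f g hf hg =>
          simp only [brk_add_left, brk_add_right, hf, hg]; abel
      | single γ c =>
        rw [brk_single_single, brk_single_single, brk_single_single, brk_single_single,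
          brk_single_single, brk_single_single]
        rw [show β + (α + γ) = α + β + γ by abel, show α + (β + γ) = α + β + γ by abel,
          ← Finsupp.single_add]
        congr 1
        simp only [map_add, map_sub, map_smul, LinearMap.sub_apply, LinearMap.smul_apply,
          AddMonoidHom.add_apply, AddMonoidHom.sub_apply, AddMonoidHom.smul_apply,
          smul_eq_mul, smul_sub, sub_smul, add_smul, smul_smul]
        ring_nf
        module

variable (F A T) in
/-- The carrier of the generalized Witt algebra `W(A,T,φ)`: finitely supported
functions from `A` to `T`, where `t^α ∂` corresponds to the function supported
at `α` with value `∂`. -/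
@[nolint unusedArguments]
def W (_φ : T →ₗ[F] (A →+ F)) : Type _ := A →₀ T

noncomputable instance : AddCommGroup (W F A T φ) := inferInstanceAs (AddCommGroup (A →₀ T))

noncomputable instance : Module F (W F A T φ) := inferInstanceAs (Module F (A →₀ T))

/-- The element `t^α ∂` of the generalized Witt algebra. -/
noncomputable def tt (α : A) (d : T) : W F A T φ := Finsupp.single α d

/-- The underlying finitely supported function of an element of `W(A,T,φ)`. -/
def toF (x : W F A T φ) : A →₀ T := x

/-- The Lie ring structure on the generalized Witt algebra `W(A,T,φ)`, with bracket
determined by `[t^α ∂, t^β ∂'] = t^(α+β) (φ(∂,β) • ∂' - φ(∂',α) • ∂)`. -/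
noncomputable instance [CharZero F] : LieRing (W F A T φ) :=
  { (inferInstance : AddCommGroup (A →₀ T)) with
    bracket := fun x y => brk φ (toF φ x) (toF φ y)
    add_lie := fun x y z => brk_add_left φ x y z
    lie_add := fun x y z => brk_add_right φ x y z
    lie_self := fun x => brk_self φ x
    leibniz_lie := fun x y z => brk_leibniz φ x y z }

/-- The generalized Witt algebra `W(A,T,φ)` as a Lie algebra over `F`. -/
noncomputable instance [CharZero F] : LieAlgebra F (W F A T φ) :=
  { (inferInstance : Module F (A →₀ T)) with
    lie_smul := fun c x y => brk_smul_right φ c x y }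

@[simp] theorem bracket_tt [CharZero F] (α β : A) (a b : T) :
    ⁅tt φ α a, tt φ β b⁆ = tt φ (α + β) (φ a β • b - φ b α • a) :=
  brk_single_single φ α β a b

/-- Nondegeneracy of the map `φ`. -/
def Nondeg : Prop :=
  (∀ α : A, (∀ d : T, φ d α = 0) → α = 0) ∧ (∀ d : T, (∀ α : A, φ d α = 0) → d = 0)

/-- `(A', T')` is a nondegenerate pair for `φ`. -/
def NondegPair (A' : AddSubgroup A) (T' : Submodule F T) : Prop :=
  (∀ d ∈ T', (∀ α ∈ A', φ d α = 0) → d = 0) ∧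
  (∀ α ∈ A', (∀ d ∈ T', φ d α = 0) → α = 0)

/-- The subset (in fact Lie subalgebra) of `W(A,T,φ)` consisting of the finitely
supported functions supported in `A'` with values in `T'`. -/
def supportedIn (A' : AddSubgroup A) (T' : Submodule F T) : Set (W F A T φ) :=
  {x | (∀ α : A, toF φ x α ∈ T') ∧ ∀ α : A, α ∉ A' → toF φ x α = 0}

end GW

namespace GW

variable {F : Type*} [Field F]
variable {A : Type*} [AddCommGroup A]
variable {T : Type*} [AddCommGroup T] [Module F T]
variable (φ : T →ₗ[F] (A →+ F))

noncomputable def evalAt (α : A) : T →ₗ[F] F where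
  toFun d := φ d α
  map_add' d d' := by simp
  map_smul' c d := by simp

noncomputable def annihilator (S : Set A) : Submodule F T :=
  LinearMap.ker (LinearMap.pi fun α : S => evalAt φ α)

variable {φ}

lemma mem_annihilator {S : Set A} {d : T} : d ∈ annihilator φ S ↔ ∀ α ∈ S, φ d α = 0 := by
  simp [annihilator, funext_iff, evalAt]

lemma annihilator_anti {S S' : Set A} (h : S ⊆ S') : annihilator φ S' ≤ annihilator φ S :=
  fun _ hd => mem_annihilator.2 fun α hα => mem_annihilator.1 hd α (h hα)

lemma annihilator_closure (S : Set A) :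
    annihilator φ (AddSubgroup.closure S : Set A) = annihilator φ S := by
  refine le_antisymm (annihilator_anti AddSubgroup.subset_closure) fun d hd => ?_
  have hS : AddSubgroup.closure S ≤ (φ d).ker :=
    (AddSubgroup.closure_le _).2 fun α hα => mem_annihilator.1 hd α hα
  exact mem_annihilator.2 fun α hα => hS hα

instance finiteDimensional_quotient_annihilator (S : Finset A) :
    FiniteDimensional F (T ⧸ annihilator φ (S : Set A)) :=
  (LinearMap.quotKerEquivRange _).symm.finiteDimensional

/-- Choosing `B` with `V ⊓ annihilator φ B` of least dimension, adjoining any `α` to `B` cannot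
shrink it, so it is killed by every `φ(-, α)`. -/
lemma exists_finset_disjoint_annihilator (hφ : ∀ d : T, (∀ α : A, φ d α = 0) → d = 0)
    (V : Submodule F T) [FiniteDimensional F V] :
    ∃ B : Finset A, Disjoint V (annihilator φ (B : Set A)) := by
  classical
  let dim (B : Finset A) : ℕ := Module.finrank F ↥(V ⊓ annihilator φ (B : Set A))
  obtain ⟨B, -, hB⟩ := (measure dim).wf.has_min Set.univ ⟨∅, trivial⟩
  refine ⟨B, disjoint_iff.2 (eq_bot_iff.2 fun d hd => hφ d fun α => ?_)⟩
  have hle : V ⊓ annihilator φ (insert α B : Finset A) ≤ V ⊓ annihilator φ (B : Set A) :=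
    inf_le_inf_left V (annihilator_anti (by simp))
  have heq := Submodule.eq_of_le_of_finrank_le hle (not_lt.1 (hB _ trivial))
  rw [← heq] at hd
  exact mem_annihilator.1 hd.2 α (by simp)

lemma nondegPair_of_isCompl (hφ : ∀ α : A, (∀ d : T, φ d α = 0) → α = 0)
    {A' : AddSubgroup A} {T' : Submodule F T} (h : IsCompl T' (annihilator φ (A' : Set A))) :
    NondegPair φ A' T' := by
  refine ⟨fun d hd hdA' => ?_, fun α hα hαT' => hφ α fun d => ?_⟩
  · exact Submodule.disjoint_def.1 h.disjoint d hd (mem_annihilator.2 hdA')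
  · obtain ⟨t, ht, k, hk, rfl⟩ := Submodule.mem_sup.1 (h.sup_eq_top ▸ Submodule.mem_top (x := d))
    rw [map_add, AddMonoidHom.add_apply, hαT' t ht, mem_annihilator.1 hk α hα, add_zero]

/-- Adjoin to the generators finitely many `α` detecting `V₀`; then `V₀` misses the annihilator of
`A'`, and `T'` is a complement of that annihilator containing `V₀`. -/
lemma exists_nondegPair_le (hφ : Nondeg φ) (A₀ : AddSubgroup A) (hA₀ : A₀.FG)
    (V₀ : Submodule F T) [FiniteDimensional F V₀] :
    ∃ (A' : AddSubgroup A) (T' : Submodule F T), A₀ ≤ A' ∧ V₀ ≤ T' ∧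
      A'.FG ∧ FiniteDimensional F T' ∧ NondegPair φ A' T' := by
  classical
  obtain ⟨S, rfl⟩ := hA₀
  obtain ⟨B, hB⟩ := exists_finset_disjoint_annihilator hφ.2 V₀
  have hann : annihilator φ (AddSubgroup.closure ((S ∪ B : Finset A) : Set A) : Set A) =
      annihilator φ ((S ∪ B : Finset A) : Set A) :=
    annihilator_closure _
  have hdisj : Disjoint V₀ (annihilator φ ((S ∪ B : Finset A) : Set A)) :=
    hB.mono_right (annihilator_anti (by simp))
  obtain ⟨T', hV₀T', hcompl⟩ := hdisj.exists_isCompl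
  refine ⟨_, T', AddSubgroup.closure_mono (by simp), hV₀T', ⟨S ∪ B, rfl⟩,
    (Submodule.quotientEquivOfIsCompl _ T' hcompl.symm).finiteDimensional,
    nondegPair_of_isCompl hφ.1 (hann ▸ hcompl)⟩

lemma supportedIn_mono {A₁ A₂ : AddSubgroup A} {T₁ T₂ : Submodule F T} (hA : A₁ ≤ A₂)
    (hT : T₁ ≤ T₂) : supportedIn φ A₁ T₁ ⊆ supportedIn φ A₂ T₂ :=
  fun _ hx => ⟨fun α => hT (hx.1 α), fun α hα => hx.2 α fun h => hα (hA h)⟩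

lemma mem_supportedIn_closure_support_span_frange [DecidableEq T] (x : W F A T φ) :
    x ∈ supportedIn φ (AddSubgroup.closure ((toF φ x).support : Set A))
      (Submodule.span F ((toF φ x).frange : Set T)) := by
  refine ⟨fun α => ?_, fun α hα => ?_⟩
  · by_cases h : toF φ x α = 0
    · exact h ▸ Submodule.zero_mem _
    · exact Submodule.subset_span (Finsupp.mem_frange.2 ⟨h, α, rfl⟩)
  · by_contra h
    exact hα (AddSubgroup.subset_closure (Finsupp.mem_support_iff.2 h))

end GW

theorem GW.mem_finite_subalgebra_general
    {F : Type*} [Field F]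
    {A : Type*} [AddCommGroup A]
    {T : Type*} [AddCommGroup T] [Module F T]
    (φ : T →ₗ[F] (A →+ F))
    (hA : Nontrivial A) (hφ : GW.Nondeg φ)
    (x y : GW.W F A T φ) :
    ∃ (A' : AddSubgroup A) (T' : Submodule F T),
      A'.FG ∧ A' ≠ ⊥ ∧ FiniteDimensional F T' ∧ GW.NondegPair φ A' T' ∧
      x ∈ GW.supportedIn φ A' T' ∧ y ∈ GW.supportedIn φ A' T' := by
  classical
  obtain ⟨α₀, hα₀⟩ := (nontrivial_iff_exists_ne 0).1 hA
  let S : Finset A := insert α₀ ((GW.toF φ x).support ∪ (GW.toF φ y).support)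
  let V₀ := Submodule.span F ((GW.toF φ x).frange : Set T) ⊔
    Submodule.span F ((GW.toF φ y).frange : Set T)
  obtain ⟨A', T', hSA', hV₀T', hfg, hfd, hpair⟩ :=
    GW.exists_nondegPair_le hφ (AddSubgroup.closure (S : Set A)) ⟨S, rfl⟩ V₀
  have hsupp {Z : Finset A} (hZ : Z ⊆ S) : AddSubgroup.closure (Z : Set A) ≤ A' :=
    (AddSubgroup.closure_mono (Finset.coe_subset.2 hZ)).trans hSA'
  have hα₀A' : α₀ ∈ A' := hSA' (AddSubgroup.subset_closure (Finset.mem_insert_self α₀ _))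
  refine ⟨A', T', hfg, fun h => hα₀ (by simpa [h] using hα₀A'), hfd, hpair, ?_, ?_⟩
  · exact GW.supportedIn_mono (hsupp (Finset.union_subset_left (Finset.subset_insert _ _)))
      (le_sup_left.trans hV₀T') (GW.mem_supportedIn_closure_support_span_frange x)
  · exact GW.supportedIn_mono (hsupp (Finset.union_subset_right (Finset.subset_insert _ _)))
      (le_sup_right.trans hV₀T') (GW.mem_supportedIn_closure_support_span_frange y)

/-- Lemma 3.1: any two elements `x, y` of a simple generalized Witt
algebra `W(A,T,φ)` lie in the subalgebra of elements supported in `A'` with values in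
`T'`, for some nonzero finitely generated (hence free of finite rank `n ≥ 1`) subgroup
`A'` of `A` and some finite-dimensional subspace `T'` of `T` forming a nondegenerate
pair. -/
theorem GW.mem_finite_subalgebra
    {F : Type*} [Field F] [CharZero F]
    {A : Type*} [AddCommGroup A]
    {T : Type*} [AddCommGroup T] [Module F T]
    (φ : T →ₗ[F] (A →+ F))
    (hA : Nontrivial A) (hφ : GW.Nondeg φ)
    (x y : GW.W F A T φ) :
    ∃ (A' : AddSubgroup A) (T' : Submodule F T),
      A'.FG ∧ A' ≠ ⊥ ∧ FiniteDimensional F T' ∧ GW.NondegPair φ A' T' ∧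
      x ∈ GW.supportedIn φ A' T' ∧ y ∈ GW.supportedIn φ A' T' :=
  GW.mem_finite_subalgebra_general φ hA hφ x y
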